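/- For every nonempty extension-set 𝕊 and each semantics σ ∈ {naive, stb, stage, pref, sem}: σ(F^cf_𝕊) = 𝕊⁺, where F^cf_𝕊 = (Arg_𝕊, (Arg_𝕊 × Arg_𝕊) ∖ Pairs_𝕊) is the canonical AF of 𝕊. -/

import Mathlib

structure AF where
  A : Finset ℕ
  R : Set (ℕ × ℕ)
  R_sub : ∀ p ∈ R, p.1 ∈ A ∧ p.2 ∈ A

namespace AF

def cf (F : AF) : Set (Set ℕ) :=
  {S | S ⊆ ↑F.A ∧ ∀ a ∈ S, ∀ b ∈ S, (a, b) ∉ F.R}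

def defends (F : AF) (S : Set ℕ) (a : ℕ) : Prop :=
  ∀ b, (b, a) ∈ F.R → ∃ s ∈ S, (s, b) ∈ F.R

def adm (F : AF) : Set (Set ℕ) :=
  {S | S ∈ F.cf ∧ ∀ a ∈ S, F.defends S a}

def rng (F : AF) (S : Set ℕ) : Set ℕ :=
  S ∪ {b | ∃ s ∈ S, (s, b) ∈ F.R}

def naive (F : AF) : Set (Set ℕ) :=
  {S | S ∈ F.cf ∧ ∀ T ∈ F.cf, S ⊆ T → S = T}

def stb (F : AF) : Set (Set ℕ) :=
  {S | S ∈ F.cf ∧ ∀ a ∈ F.A, a ∉ S → ∃ s ∈ S, (s, a) ∈ F.R}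

def pref (F : AF) : Set (Set ℕ) :=
  {S | S ∈ F.adm ∧ ∀ T ∈ F.adm, S ⊆ T → S = T}

def stage (F : AF) : Set (Set ℕ) :=
  {S | S ∈ F.cf ∧ ¬ ∃ T ∈ F.cf, F.rng S ⊂ F.rng T}

def sem (F : AF) : Set (Set ℕ) :=
  {S | S ∈ F.adm ∧ ¬ ∃ T ∈ F.adm, F.rng S ⊂ F.rng T}

end AF

abbrev Semantics := AF → Set (Set ℕ)

def StandardSemantics : Set Semantics :=
  {AF.naive, AF.stb, AF.stage, AF.pref, AF.sem}

def AFCompact (σ : Semantics) (F : AF) : Prop :=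
  ∀ a ∈ F.A, ∃ S ∈ σ F, a ∈ S

def CAF (σ : Semantics) : Set AF := {F | AFCompact σ F}

def ArgS (𝕊 : Set (Set ℕ)) : Set ℕ := ⋃₀ 𝕊

def PairsS (𝕊 : Set (Set ℕ)) : Set (ℕ × ℕ) :=
  {p | ∃ S ∈ 𝕊, p.1 ∈ S ∧ p.2 ∈ S}

def IsExtensionSet (𝕊 : Set (Set ℕ)) : Prop := (ArgS 𝕊).Finite

def AFStep (F : AF) (a b : ℕ) : Prop := (a, b) ∈ F.R ∨ (b, a) ∈ F.R

def AFConnected (F : AF) : Prop :=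
  ∀ a ∈ F.A, ∀ b ∈ F.A, Relation.ReflTransGen (AFStep F) a b

def sameComp (F : AF) (a b : ℕ) : Prop := Relation.ReflTransGen (AFStep F) a b

def comps (F : AF) : Set (Set ℕ) :=
  {K | ∃ a ∈ F.A, K = {b ∈ (↑F.A : Set ℕ) | sameComp F a b}}

def nopairs (𝕊 : Set (Set ℕ)) (a b : ℕ) : Prop :=
  a ∈ ArgS 𝕊 ∧ b ∈ ArgS 𝕊 ∧ (a, b) ∉ PairsS 𝕊

def compsS (𝕊 : Set (Set ℕ)) : Set (Set ℕ) :=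
  {K | ∃ a ∈ ArgS 𝕊, K = {b ∈ ArgS 𝕊 | Relation.ReflTransGen (nopairs 𝕊) a b}}

noncomputable def sigmaMax (σ : Semantics) (n : ℕ) : ℕ :=
  sSup {k | ∃ F : AF, F.A.card = n ∧ (σ F).ncard = k}

noncomputable def sigmaMaxCon (σ : Semantics) (n : ℕ) : ℕ :=
  sSup {k | ∃ F : AF, F.A.card = n ∧ AFConnected F ∧ (σ F).ncard = k}

noncomputable def sigmaMax2 (σ : Semantics) (n : ℕ) : ℕ :=
  sSup ({k | ∃ F : AF, F.A.card = n ∧ (σ F).ncard = k} \ {sigmaMax σ n})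

def cfSet (𝕊 : Set (Set ℕ)) : Set (Set ℕ) :=
  {S | S ⊆ ArgS 𝕊 ∧ ∀ a ∈ S, ∀ b ∈ S, (a, b) ∈ PairsS 𝕊}

def plusSet (𝕊 : Set (Set ℕ)) : Set (Set ℕ) :=
  {S | S ∈ cfSet 𝕊 ∧ ∀ T ∈ cfSet 𝕊, S ⊆ T → S = T}

def minusSet (𝕊 : Set (Set ℕ)) : Set (Set ℕ) := plusSet 𝕊 \ 𝕊

def Sig (σ : Semantics) : Set (Set (Set ℕ)) := {𝕊 | ∃ F : AF, σ F = 𝕊}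

def cSig (σ : Semantics) : Set (Set (Set ℕ)) :=
  {𝕊 | ∃ F : AF, AFCompact σ F ∧ σ F = 𝕊}

def Pcon (σ : Semantics) (n : ℕ) : Set ℕ :=
  {k | ∃ F : AF, AFCompact σ F ∧ AFConnected F ∧ F.A.card = n ∧ (σ F).ncard = k}

open Classical in
noncomputable def restrictAF (F : AF) (K : Set ℕ) : AF where
  A := F.A.filter (fun a => a ∈ K)
  R := {p | p ∈ F.R ∧ p.1 ∈ K ∧ p.2 ∈ K}
  R_sub := fun p hp => by
    have h := F.R_sub p hp.1
    simp only [Finset.mem_filter]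
    exact ⟨⟨h.1, hp.2.1⟩, ⟨h.2, hp.2.2⟩⟩

def IsExclusionMapping (𝕊 : Set (Set ℕ)) (Rm : Set (ℕ × ℕ)) : Prop :=
  ∃ f : Set ℕ → ℕ,
    (∀ S ∈ minusSet 𝕊, f S ∈ ArgS 𝕊 ∧ f S ∉ S) ∧
    Rm = {p | ∃ S ∈ minusSet 𝕊, p.1 ∈ S ∧ p.2 = f S ∧ p ∉ PairsS 𝕊}

def Independent (𝕊 : Set (Set ℕ)) : Prop :=
  ∃ Rm : Set (ℕ × ℕ), IsExclusionMapping 𝕊 Rm ∧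
    (∀ a b, (a, b) ∈ Rm → (b, a) ∈ Rm → a = b) ∧
    ∀ S ∈ 𝕊, ∀ a ∈ ArgS 𝕊 \ S, ∃ s ∈ S, (s, a) ∉ Rm ∪ PairsS 𝕊

def ConflictExplicit (σ : Semantics) (F : AF) : Prop :=
  ∀ a ∈ F.A, ∀ b ∈ F.A, (a, b) ∉ PairsS (σ F) → (a, b) ∈ F.R ∨ (b, a) ∈ F.R

noncomputable def canonicalCF (𝕊 : Set (Set ℕ)) (h : IsExtensionSet 𝕊) : AF where
  A := h.toFinset
  R := {p | p.1 ∈ ArgS 𝕊 ∧ p.2 ∈ ArgS 𝕊 ∧ p ∉ PairsS 𝕊}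
  R_sub := fun p hp => by
    constructor
    · first
        | exact (Set.Finite.mem_toFinset (s := ArgS 𝕊) h).2 hp.1
        | exact (Set.Finite.mem_toFinset (s := ArgS 𝕊) (hs := h)).2 hp.1
    · first
        | exact (Set.Finite.mem_toFinset (s := ArgS 𝕊) h).2 hp.2.1
        | exact (Set.Finite.mem_toFinset (s := ArgS 𝕊) (hs := h)).2 hp.2.1


/-!
In the canonical AF two arguments attack each other exactly when no extension of `𝕊` contains
both, so its conflict-free sets are those of `𝕊^cf` and its naive extensions form `𝕊⁺`. The
attack relation is symmetric and irreflexive: hence every conflict-free set defends itself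
(admissible = conflict-free, so `pref = naive` and `sem = stage`), and a maximal conflict-free
set attacks every argument it cannot absorb (`stb = naive`). Stable extensions then exist, and
whenever they do, the stage extensions are exactly the stable ones.
-/

namespace AF

variable {F : AF} {S : Set ℕ}

lemma rng_subset_of_mem_cf (hS : S ∈ F.cf) : F.rng S ⊆ F.A := by
  rintro b (hb | ⟨s, -, hsb⟩)
  · exact hS.1 hb
  · exact (F.R_sub _ hsb).2

lemma mem_stb_iff_rng_eq : S ∈ F.stb ↔ S ∈ F.cf ∧ F.rng S = F.A := by
  refine and_congr_right fun hS => ⟨fun hatt => ?_, fun hrng a ha haS => ?_⟩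
  · refine (rng_subset_of_mem_cf hS).antisymm fun a ha => ?_
    by_cases haS : a ∈ S
    · exact Or.inl haS
    · exact Or.inr (hatt a ha haS)
  · have : a ∈ F.rng S := hrng ▸ ha
    exact this.resolve_left haS

lemma stage_eq_stb_of_nonempty (h : F.stb.Nonempty) : F.stage = F.stb := by
  obtain ⟨T, hT⟩ := h
  have hrngT := (mem_stb_iff_rng_eq.1 hT).2
  ext S
  refine ⟨fun ⟨hS, hmax⟩ => mem_stb_iff_rng_eq.2 ⟨hS, ?_⟩, fun hS => ⟨hS.1, ?_⟩⟩
  · by_contra hne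
    exact hmax ⟨T, hT.1, ((rng_subset_of_mem_cf hS).trans_eq hrngT.symm).ssubset_of_ne
      (hne <| ·.trans hrngT)⟩
  · rintro ⟨U, hU, hlt⟩
    exact hlt.not_subset ((rng_subset_of_mem_cf hU).trans_eq (mem_stb_iff_rng_eq.1 hS).2.symm)

lemma stb_subset_naive (F : AF) : F.stb ⊆ F.naive := by
  refine fun S ⟨hS, hatt⟩ => ⟨hS, fun T hT hST => hST.antisymm fun a haT => ?_⟩
  by_contra haS
  obtain ⟨s, hs, hsa⟩ := hatt a (hT.1 haT) haS
  exact hT.2 s (hST hs) a haT hsa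

lemma naive_nonempty (F : AF) : F.naive.Nonempty := by
  have hfin : F.cf.Finite := F.A.finite_toSet.finite_subsets.subset fun S hS => hS.1
  obtain ⟨S, hS, hmax⟩ := hfin.exists_maximal ⟨∅, Set.empty_subset _, by simp⟩
  exact ⟨S, hS, fun T hT hST => hST.antisymm (hmax hT hST)⟩

section Symmetric

variable (hsymm : ∀ a b, (a, b) ∈ F.R → (b, a) ∈ F.R)
include hsymm

lemma adm_eq_cf_of_symm : F.adm = F.cf := by
  ext S
  exact ⟨And.left, fun hS => ⟨hS, fun a ha b hba => ⟨a, ha, hsymm b a hba⟩⟩⟩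

lemma pref_eq_naive_of_symm : F.pref = F.naive := by
  simp only [pref, naive, adm_eq_cf_of_symm hsymm]

lemma sem_eq_stage_of_symm : F.sem = F.stage := by
  simp only [sem, stage, adm_eq_cf_of_symm hsymm]

lemma stb_eq_naive_of_symm (hirr : ∀ a, (a, a) ∉ F.R) : F.stb = F.naive := by
  refine F.stb_subset_naive.antisymm fun S ⟨hS, hmax⟩ => ⟨hS, fun a ha haS => ?_⟩
  by_contra hno
  push Not at hno
  have hins : insert a S ∈ F.cf := by
    refine ⟨Set.insert_subset ha hS.1, ?_⟩
    rintro x (rfl | hx) y (rfl | hy)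
    · exact hirr _
    · exact fun h => hno y hy (hsymm _ y h)
    · exact hno x hx
    · exact hS.2 x hx y hy
  exact haS (hmax _ hins (Set.subset_insert a S) ▸ Set.mem_insert a S)

end Symmetric

end AF

section Canonical

variable {𝕊 : Set (Set ℕ)} (hext : IsExtensionSet 𝕊)

lemma PairsS.symm {a b : ℕ} : (a, b) ∈ PairsS 𝕊 → (b, a) ∈ PairsS 𝕊 :=
  fun ⟨S, hS, ha, hb⟩ => ⟨S, hS, hb, ha⟩

lemma canonicalCF_R_symm (a b : ℕ) :
    (a, b) ∈ (canonicalCF 𝕊 hext).R → (b, a) ∈ (canonicalCF 𝕊 hext).R :=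
  fun ⟨ha, hb, hab⟩ => ⟨hb, ha, fun hba => hab (PairsS.symm hba)⟩

lemma canonicalCF_R_irrefl (a : ℕ) : (a, a) ∉ (canonicalCF 𝕊 hext).R := by
  rintro ⟨⟨S, hS, ha⟩, -, haa⟩
  exact haa ⟨S, hS, ha, ha⟩

lemma canonicalCF_cf : (canonicalCF 𝕊 hext).cf = cfSet 𝕊 := by
  ext S
  have hA : ((canonicalCF 𝕊 hext).A : Set ℕ) = ArgS 𝕊 := hext.coe_toFinset
  simp only [AF.cf, cfSet, hA]
  refine and_congr_right fun hS => forall₂_congr fun a ha => forall₂_congr fun b hb => ?_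
  exact ⟨fun h => not_not.1 fun hp => h ⟨hS ha, hS hb, hp⟩, fun hp hR => hR.2.2 hp⟩

lemma canonicalCF_naive : (canonicalCF 𝕊 hext).naive = plusSet 𝕊 := by
  simp only [AF.naive, plusSet, canonicalCF_cf]

end Canonical

theorem canonical_af_realizes_plus_general (σ : Semantics) (hσ : σ ∈ StandardSemantics)
    (𝕊 : Set (Set ℕ)) (hext : IsExtensionSet 𝕊) :
    σ (canonicalCF 𝕊 hext) = plusSet 𝕊 := by
  set F := canonicalCF 𝕊 hext
  have hsymm := canonicalCF_R_symm hext
  have hstb : F.stb = F.naive := AF.stb_eq_naive_of_symm hsymm (canonicalCF_R_irrefl hext)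
  have hstage : F.stage = F.naive := by
    rw [AF.stage_eq_stb_of_nonempty (hstb ▸ F.naive_nonempty), hstb]
  simp only [StandardSemantics, Set.mem_insert_iff, Set.mem_singleton_iff] at hσ
  rw [← canonicalCF_naive hext]
  rcases hσ with rfl | rfl | rfl | rfl | rfl
  · rfl
  · exact hstb
  · exact hstage
  · exact AF.pref_eq_naive_of_symm hsymm
  · rw [AF.sem_eq_stage_of_symm hsymm, hstage]

theorem canonical_af_realizes_plus (σ : Semantics) (hσ : σ ∈ StandardSemantics)
    (𝕊 : Set (Set ℕ)) (hne : 𝕊 ≠ ∅) (hext : IsExtensionSet 𝕊) :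
    σ (canonicalCF 𝕊 hext) = plusSet 𝕊 :=
  canonical_af_realizes_plus_general σ hσ 𝕊 hext
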